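/- arXiv:2504.17417 — 3 statements merged into one kernel-verified Lean document; each statement's English description precedes it below -/
import Mathlib

section
/- Let A ∈ ℝ^{n×n} be diagonalizable (over ℂ) with distinct eigenvalues λ_1,…,λ_r, and B ∈ ℝ^{n×m}, C ∈ ℝ^{p×n} with C full row rank and p < n. Then the system (A,B,C) is output controllable if and only if Im(Cᵀ) ∩ (⊕_{i=1}^r (ker(λ_i I − Aᵀ) ∩ ker(Bᵀ))) = {0}. -/
/-!
Write `𝒞 = [B, AB, …, Aⁿ⁻¹B]`. Full row rank is insensitive to extending scalars from `ℝ`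
to `ℂ`, and when `C` has full row rank, `C 𝒞` has full row rank iff `Im Cᵀ` meets `ker 𝒞ᵀ`
only in `0`. By Cayley–Hamilton, `ker 𝒞ᵀ = ⋂ₖ ker (Bᵀ (Aᵀ)ᵏ)`, an `Aᵀ`-invariant subspace.
An invariant subspace of a diagonalizable operator is the sum of its intersections with the
eigenspaces, and on the `μ`-eigenspace of `Aᵀ` the conditions `Bᵀ (Aᵀ)ᵏ x = μᵏ Bᵀ x = 0` all
reduce to `Bᵀ x = 0`.
-/

open Matrix

def ctrbMat {s : Type*} [Fintype s] [DecidableEq s] {m : ℕ}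
    (A : Matrix s s ℝ) (B : Matrix s (Fin m) ℝ) :
    Matrix s (Fin (Fintype.card s) × Fin m) ℝ :=
  Matrix.of fun i p => (A ^ (p.1 : ℕ) * B) i p.2

open Module End Polynomial

namespace Matrix

section Rank

variable {K m n o : Type*} [Field K] [Fintype m] [Fintype n]

theorem rank_eq_card_iff_linearIndependent_row (M : Matrix m n K) :
    M.rank = Fintype.card m ↔ LinearIndependent K M.row := by
  rw [rank_eq_finrank_span_row, linearIndependent_iff_card_eq_finrank_span, Set.finrank, eq_comm]

theorem rank_map_algebraMap_eq_card_iff {L : Type*} [Field L] [Algebra K L] (M : Matrix m n K) :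
    (M.map (algebraMap K L)).rank = Fintype.card m ↔ M.rank = Fintype.card m := by
  simp only [rank_eq_card_iff_linearIndependent_row]
  exact linearIndependent_algebraMap_comp_iff

theorem rank_mul_eq_card_iff [Fintype o] {M : Matrix m n K} (hM : M.rank = Fintype.card m)
    (N : Matrix n o K) :
    (M * N).rank = Fintype.card m ↔
      LinearMap.range Mᵀ.mulVecLin ⊓ LinearMap.ker Nᵀ.mulVecLin = ⊥ := by
  have hrow : (M * N).row = Nᵀ.mulVecLin ∘ M.row := by
    ext i j
    simp [vecMul, mul_apply, dotProduct]
  rw [rank_eq_card_iff_linearIndependent_row] at hM ⊢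
  rw [hrow, range_mulVecLin, col_transpose, ← disjoint_iff]
  exact ⟨Submodule.range_ker_disjoint, hM.map⟩

end Rank

section Eigenspace

variable {K n : Type*} [Field K] [Fintype n] [DecidableEq n]

theorem spectrum_transpose (M : Matrix n n K) : spectrum K Mᵀ = spectrum K M := by
  ext μ
  simp only [mem_spectrum_iff_isRoot_charpoly, charpoly_transpose]

theorem ker_mulVecLin_smul_one_sub (M : Matrix n n K) (μ : K) :
    LinearMap.ker (μ • (1 : Matrix n n K) - M).mulVecLin = eigenspace M.mulVecLin μ := by
  ext x
  simp only [LinearMap.mem_ker, mulVecLin_apply, sub_mulVec, smul_mulVec, one_mulVec,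
    sub_eq_zero, mem_eigenspace_iff, eq_comm]

theorem iSup_eigenspace_mulVecLin_eq_top {M Q : Matrix n n K} {d : n → K} (hQ : IsUnit Q.det)
    (h : M * Q = Q * diagonal d) : ⨆ μ, eigenspace M.mulVecLin μ = ⊤ := by
  have hcol : ∀ j, M *ᵥ Q.col j = d j • Q.col j := fun j => by
    ext i
    have hij := congrFun (congrFun h i) j
    rw [mul_diagonal] at hij
    simpa [mulVec, dotProduct, mul_apply, mul_comm] using hij
  have hrange : LinearMap.range Q.mulVecLin = ⊤ :=
    LinearMap.range_eq_top.mpr (mulVec_surjective_iff_isUnit.mpr ((isUnit_iff_isUnit_det Q).mpr hQ))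
  rw [eq_top_iff, ← hrange, range_mulVecLin, Submodule.span_le]
  rintro - ⟨j, rfl⟩
  exact Submodule.mem_iSup_of_mem (d j) (mem_eigenspace_iff.mpr (hcol j))

end Eigenspace

end Matrix

namespace Module.End

variable {K V W : Type*} [Field K] [AddCommGroup V] [Module K V] [AddCommGroup W] [Module K W]
  [FiniteDimensional K V]

theorem forall_pow_apply_eq_zero_iff_forall_lt_finrank (f : End K V) (g : V →ₗ[K] W) (x : V) :
    (∀ k, g ((f ^ k) x) = 0) ↔ ∀ k < finrank K V, g ((f ^ k) x) = 0 := by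
  refine ⟨fun h k _ => h k, fun h k => ?_⟩
  rw [LinearMap.pow_eq_aeval_mod_charpoly]
  set r := X ^ k %ₘ f.charpoly
  rcases eq_or_ne r 0 with hr | hr
  · simp [hr]
  have hdeg : r.natDegree < finrank K V := by
    rw [← LinearMap.charpoly_natDegree f]
    exact natDegree_lt_natDegree hr (degree_modByMonic_lt _ (LinearMap.charpoly_monic f))
  rw [aeval_eq_sum_range' hdeg]
  simp only [LinearMap.coe_sum, LinearMap.coe_smul, Finset.sum_apply, Pi.smul_apply, map_sum,
    map_smul]
  exact Finset.sum_eq_zero fun i hi => by rw [h i (Finset.mem_range.mp hi), smul_zero]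

theorem iInf_ker_comp_pow_eq_iSup_eigenspace_inf_ker {f : End K V}
    (hf : ⨆ μ, f.eigenspace μ = ⊤) (g : V →ₗ[K] W) :
    ⨅ k : ℕ, LinearMap.ker (g ∘ₗ f ^ k) = ⨆ μ, f.eigenspace μ ⊓ LinearMap.ker g := by
  set S := ⨅ k : ℕ, LinearMap.ker (g ∘ₗ f ^ k)
  have hS : ∀ x ∈ S, f x ∈ S := by
    simp only [S, Submodule.mem_iInf, LinearMap.mem_ker, LinearMap.comp_apply]
    intro x hx k
    rw [← mul_apply, ← pow_succ]
    exact hx (k + 1)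
  have heig : ∀ μ, S ⊓ f.eigenspace μ = f.eigenspace μ ⊓ LinearMap.ker g := by
    intro μ
    ext x
    simp only [S, Submodule.mem_inf, Submodule.mem_iInf, LinearMap.mem_ker, LinearMap.comp_apply]
    constructor
    · rintro ⟨hx, hμ⟩
      exact ⟨hμ, by simpa using hx 0⟩
    · rintro ⟨hμ, hx⟩
      refine ⟨fun k => ?_, hμ⟩
      have hpow : (f ^ k) x = μ ^ k • x := by
        simpa using aeval_apply_of_mem_apply_eq_smul (p := X ^ k) (mem_eigenspace_iff.mp hμ)
      rw [hpow, map_smul, hx, smul_zero]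
  calc S = S ⊓ ⨆ μ, f.eigenspace μ := by rw [hf, inf_top_eq]
    _ = ⨆ μ, S ⊓ f.eigenspace μ := Submodule.inf_iSup_genEigenspace hS 1
    _ = _ := by simp only [heig]

theorem iSup_eigenspace_inf_eq_biSup_spectrum (f : End K V) (p : Submodule K V) :
    ⨆ μ, f.eigenspace μ ⊓ p = ⨆ μ ∈ spectrum K f, f.eigenspace μ ⊓ p := by
  refine le_antisymm (iSup_le fun μ => ?_) (iSup_mono fun μ => iSup_le fun _ => le_rfl)
  by_cases hμ : μ ∈ spectrum K f
  · exact le_iSup₂_of_le μ hμ le_rfl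
  · rw [← hasEigenvalue_iff_mem_spectrum, hasEigenvalue_iff, not_not] at hμ
    simp [hμ]

end Module.End

section Controllability

variable {s : Type*} [Fintype s] [DecidableEq s] {m : ℕ}

theorem transpose_map_ctrbMat_mulVec_apply (A : Matrix s s ℝ) (B : Matrix s (Fin m) ℝ)
    (x : s → ℂ) (k : Fin (Fintype.card s)) (j : Fin m) :
    (((ctrbMat A B).map Complex.ofReal)ᵀ *ᵥ x) (k, j) =
      ((B.map Complex.ofReal)ᵀ *ᵥ ((A.map Complex.ofReal)ᵀ ^ (k : ℕ) *ᵥ x)) j := by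
  rw [mulVec_mulVec, ← transpose_pow, ← transpose_mul, ← Complex.coe_algebraMap,
    ← RingHom.mapMatrix_apply, ← map_pow, RingHom.mapMatrix_apply, ← Matrix.map_mul]
  simp [mulVec, dotProduct, ctrbMat]

theorem ker_transpose_map_ctrbMat_eq_iInf (A : Matrix s s ℝ) (B : Matrix s (Fin m) ℝ) :
    LinearMap.ker ((ctrbMat A B).map Complex.ofReal)ᵀ.mulVecLin =
      ⨅ k : ℕ, LinearMap.ker
        ((B.map Complex.ofReal)ᵀ.mulVecLin ∘ₗ (A.map Complex.ofReal)ᵀ.mulVecLin ^ k) := by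
  have hpow : ∀ (k : ℕ) (x : s → ℂ), ((A.map Complex.ofReal)ᵀ.mulVecLin ^ k) x =
      (A.map Complex.ofReal)ᵀ ^ k *ᵥ x := fun k x => by
    rw [← toLin'_apply', ← toLin'_pow, toLin'_apply]
  ext x
  simp only [LinearMap.mem_ker, Submodule.mem_iInf, LinearMap.comp_apply]
  rw [forall_pow_apply_eq_zero_iff_forall_lt_finrank, finrank_fintype_fun_eq_card]
  simp only [mulVecLin_apply, hpow, funext_iff, Prod.forall, Fin.forall_iff,
    transpose_map_ctrbMat_mulVec_apply, Pi.zero_apply]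

theorem ker_transpose_map_ctrbMat_eq_iSup {A : Matrix s s ℝ} (B : Matrix s (Fin m) ℝ)
    (hA : ∃ P D : Matrix s s ℂ, IsUnit P.det ∧ D.IsDiag ∧
      A.map Complex.ofReal = P * D * P⁻¹) :
    LinearMap.ker ((ctrbMat A B).map Complex.ofReal)ᵀ.mulVecLin =
      ⨆ μ ∈ spectrum ℂ (A.map Complex.ofReal),
        LinearMap.ker ((μ • (1 : Matrix s s ℂ) - (A.map Complex.ofReal)ᵀ).mulVecLin) ⊓
          LinearMap.ker ((B.map Complex.ofReal)ᵀ.mulVecLin) := by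
  obtain ⟨P, D, hP, hD, hPD⟩ := hA
  set A' := A.map Complex.ofReal
  have hleft : P⁻¹ * A' = diagonal D.diag * P⁻¹ := by
    rw [hPD, hD.diagonal_diag, ← mul_assoc, ← mul_assoc, nonsing_inv_mul _ hP, one_mul]
  have hcomm : A'ᵀ * (P⁻¹)ᵀ = (P⁻¹)ᵀ * diagonal D.diag := by
    rw [← transpose_mul, hleft, transpose_mul, diagonal_transpose]
  have hunit : IsUnit (P⁻¹)ᵀ.det := by
    rw [det_transpose]
    exact isUnit_nonsing_inv_det P hP
  have hspec : spectrum ℂ A'ᵀ.mulVecLin = spectrum ℂ A' := by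
    rw [← toLin'_apply', spectrum_toLin', spectrum_transpose]
  simp only [ker_mulVecLin_smul_one_sub]
  rw [ker_transpose_map_ctrbMat_eq_iInf, iInf_ker_comp_pow_eq_iSup_eigenspace_inf_ker
    (iSup_eigenspace_mulVecLin_eq_top hunit hcomm), iSup_eigenspace_inf_eq_biSup_spectrum, hspec]

end Controllability

theorem stmt_4_general {n m p : ℕ}
    (A : Matrix (Fin n) (Fin n) ℝ) (B : Matrix (Fin n) (Fin m) ℝ)
    (C : Matrix (Fin p) (Fin n) ℝ) (hC : C.rank = p)
    (hdiag : ∃ P D : Matrix (Fin n) (Fin n) ℂ, IsUnit P.det ∧ D.IsDiag ∧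
      A.map Complex.ofReal = P * D * P⁻¹) :
    (C * ctrbMat A B).rank = p ↔
      LinearMap.range ((C.map Complex.ofReal)ᵀ.mulVecLin) ⊓
        (⨆ μ ∈ spectrum ℂ (A.map Complex.ofReal),
          LinearMap.ker
              ((μ • (1 : Matrix (Fin n) (Fin n) ℂ) - (A.map Complex.ofReal)ᵀ).mulVecLin) ⊓
            LinearMap.ker ((B.map Complex.ofReal)ᵀ.mulVecLin)) = ⊥ := by
  have hC' : (C.map Complex.ofReal).rank = Fintype.card (Fin p) := by
    rw [← Complex.coe_algebraMap, rank_map_algebraMap_eq_card_iff, hC, Fintype.card_fin]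
  have hrank : (C * ctrbMat A B).rank = p ↔
      (C.map Complex.ofReal * (ctrbMat A B).map Complex.ofReal).rank = Fintype.card (Fin p) := by
    rw [← Complex.coe_algebraMap, ← Matrix.map_mul, rank_map_algebraMap_eq_card_iff]
    simp only [Fintype.card_fin]
  rw [hrank, rank_mul_eq_card_iff hC', ker_transpose_map_ctrbMat_eq_iSup B hdiag]

/-- PBH-type test for output controllability when `A` is diagonalizable over `ℂ`:
`(A,B,C)` is output controllable iff
`Im(Cᵀ) ∩ (⊕_{λ ∈ spec(A)} (ker(λI − Aᵀ) ∩ ker Bᵀ)) = {0}`. -/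
theorem stmt_4 {n m p : ℕ} (hp : p < n)
    (A : Matrix (Fin n) (Fin n) ℝ) (B : Matrix (Fin n) (Fin m) ℝ)
    (C : Matrix (Fin p) (Fin n) ℝ) (hC : C.rank = p)
    (hdiag : ∃ P D : Matrix (Fin n) (Fin n) ℂ, IsUnit P.det ∧ D.IsDiag ∧
      A.map Complex.ofReal = P * D * P⁻¹) :
    (C * ctrbMat A B).rank = p ↔
      LinearMap.range ((C.map Complex.ofReal)ᵀ.mulVecLin) ⊓
        (⨆ μ ∈ spectrum ℂ (A.map Complex.ofReal),
          LinearMap.ker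
              ((μ • (1 : Matrix (Fin n) (Fin n) ℂ) - (A.map Complex.ofReal)ᵀ).mulVecLin) ⊓
            LinearMap.ker ((B.map Complex.ofReal)ᵀ.mulVecLin)) = ⊥ :=
  stmt_4_general A B C hC hdiag
end

section
/- Let A ∈ ℝ^{n×n} with distinct eigenvalues λ_1,…,λ_r, B ∈ ℝ^{n×m}, C ∈ ℝ^{p×n}, and K_C ∈ ℝ^{n×(n−p)} with Im(K_C) = ker(C). Then Im(Cᵀ) ∩ (⊕_{i=1}^r (ker(λ_i I − Aᵀ) ∩ ker(Bᵀ))) = {0} if and only if the matrix [diag([λ_1 I − A, B], …, [λ_r I − A, B]) | 1_r ⊗ K_C] has full row rank rn. -/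
/-!
A row vector `v = (v₁, …, v_r)` annihilates `[diag(λᵢI − A, B) | 1_r ⊗ K_C]` exactly when every
`vᵢ` lies in `ker(λᵢI − Aᵀ) ∩ ker Bᵀ` and `∑ vᵢ ∈ ker K_Cᵀ`. Dualising `Im K_C = ker C` gives
`ker K_Cᵀ = Im Cᵀ`. The `vᵢ` lie in eigenspaces of `Aᵀ` for distinct eigenvalues, which are
independent, so `∑ vᵢ = 0` forces every `vᵢ = 0`: the left kernel is trivial, i.e. the rank is
`r n`, iff `Im Cᵀ` meets `⊕ᵢ (ker(λᵢI − Aᵀ) ∩ ker Bᵀ)` only in `0`.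
-/

open Matrix

theorem Submodule.inf_iSup_eq_bot_iff {R M ι : Type*} [Ring R] [AddCommGroup M] [Module R M]
    [Fintype ι] {S : Submodule R M} {W : ι → Submodule R M} (hW : iSupIndep W) :
    S ⊓ ⨆ i, W i = ⊥ ↔ ∀ w : ι → M, (∀ i, w i ∈ W i) → ∑ i, w i ∈ S → w = 0 := by
  constructor
  · intro h w hw hS
    have hsum : ∑ i, w i = 0 := by
      rw [← Submodule.mem_bot R, ← h]
      exact ⟨hS, Submodule.sum_mem _ fun i _ => Submodule.mem_iSup_of_mem i (hw i)⟩
    funext i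
    exact (iSupIndep_iff_finsetSum_eq_zero_imp_eq_zero W).1 hW Finset.univ w (fun i _ => hw i)
      hsum i (Finset.mem_univ i)
  · intro h
    rw [eq_bot_iff]
    rintro _ ⟨hS, hW⟩
    obtain ⟨f, hf, rfl⟩ := (Submodule.mem_iSup_iff_exists_finsupp W _).1 hW
    rw [Finsupp.sum_fintype _ _ fun _ => rfl] at hS ⊢
    simp [h f hf hS]

namespace Matrix

theorem ker_mulVecLin_smul_one_sub_s5 {R n : Type*} [CommRing R] [Fintype n] [DecidableEq n]
    (A : Matrix n n R) (μ : R) :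
    LinearMap.ker (μ • (1 : Matrix n n R) - A).mulVecLin =
      Module.End.eigenspace A.mulVecLin μ := by
  ext x
  simp [sub_eq_zero, eq_comm]

variable {R : Type*} [Field R] {ι l l' m n k : Type*}

theorem rank_eq_card_iff_vecMul_injective [Fintype m] [Fintype n] (M : Matrix m n R) :
    M.rank = Fintype.card m ↔ Function.Injective M.vecMul := by
  rw [vecMul_injective_iff, linearIndependent_iff_card_eq_finrank_span, rank_eq_finrank_span_row,
    Set.finrank, eq_comm]

theorem range_mulVecLin_transpose_eq_ker [Fintype l] [Fintype m] [Fintype n]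
    {C : Matrix l m R} {D : Matrix m n R}
    (h : LinearMap.range D.mulVecLin = LinearMap.ker C.mulVecLin) :
    LinearMap.range Cᵀ.mulVecLin = LinearMap.ker Dᵀ.mulVecLin := by
  classical
  have hCD : C * D = 0 := by
    apply toLin'.injective
    rw [toLin'_apply', toLin'_apply', mulVecLin_mul, mulVecLin_zero, ← LinearMap.range_le_ker_iff,
      h]
  have hle : LinearMap.range Cᵀ.mulVecLin ≤ LinearMap.ker Dᵀ.mulVecLin := by
    rw [LinearMap.range_le_ker_iff, ← mulVecLin_mul, ← transpose_mul, hCD, transpose_zero,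
      mulVecLin_zero]
  refine Submodule.eq_of_le_of_finrank_eq hle ?_
  have hC := LinearMap.finrank_range_add_finrank_ker C.mulVecLin
  have hD := LinearMap.finrank_range_add_finrank_ker Dᵀ.mulVecLin
  have hDt : Dᵀ.rank = D.rank := rank_transpose D
  have hCt : Cᵀ.rank = C.rank := rank_transpose C
  simp only [Module.finrank_fintype_fun_eq_card] at hC hD
  unfold rank at hDt hCt
  rw [h] at hDt
  omega

theorem vecMul_fromCols_eq_zero_iff [Fintype m] (B₁ : Matrix m l R) (B₂ : Matrix m l' R)
    (v : m → R) : v ᵥ* fromCols B₁ B₂ = 0 ↔ v ᵥ* B₁ = 0 ∧ v ᵥ* B₂ = 0 := by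
  rw [vecMul_fromCols, ← Sum.elim_zero_zero, Sum.elim_eq_iff]

/-- `blockDiagonalFromCols P K` is `[diag(P₁, …, P_r) | 1_r ⊗ K]`. -/
def blockDiagonalFromCols [DecidableEq ι] (P : ι → Matrix n k R) (K : Matrix n l R) :
    Matrix (ι × n) ((ι × k) ⊕ l) R :=
  of fun x c => Sum.elim (fun y => if x.1 = y.1 then P x.1 x.2 y.2 else 0) (fun j => K x.2 j) c

section blockDiagonalFromCols

variable [Fintype ι] [Fintype n] [DecidableEq ι] (P : ι → Matrix n k R) (K : Matrix n l R)
  (v : ι × n → R)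

theorem vecMul_blockDiagonalFromCols_inl (i : ι) (j : k) :
    (v ᵥ* blockDiagonalFromCols P K) (.inl (i, j)) = (Function.curry v i ᵥ* P i) j := by
  simp [blockDiagonalFromCols, vecMul, dotProduct, Fintype.sum_prod_type]

theorem vecMul_blockDiagonalFromCols_inr (j : l) :
    (v ᵥ* blockDiagonalFromCols P K) (.inr j) = ((∑ i, Function.curry v i) ᵥ* K) j := by
  simp only [blockDiagonalFromCols, vecMul, dotProduct, of_apply, Sum.elim_inr,
    Fintype.sum_prod_type, Finset.sum_apply, Function.curry_apply, Finset.sum_mul]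
  exact Finset.sum_comm

theorem vecMul_blockDiagonalFromCols_eq_zero_iff :
    v ᵥ* blockDiagonalFromCols P K = 0 ↔
      (∀ i, Function.curry v i ᵥ* P i = 0) ∧ (∑ i, Function.curry v i) ᵥ* K = 0 := by
  simp only [funext_iff, Sum.forall, Prod.forall, vecMul_blockDiagonalFromCols_inl,
    vecMul_blockDiagonalFromCols_inr, Pi.zero_apply]

theorem vecMul_blockDiagonalFromCols_injective_iff :
    Function.Injective (blockDiagonalFromCols P K).vecMul ↔
      ∀ w : ι → n → R, (∀ i, w i ᵥ* P i = 0) → (∑ i, w i) ᵥ* K = 0 → w = 0 := by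
  rw [← coe_vecMulLinear, injective_iff_map_eq_zero]
  simp only [vecMulLinear_apply, vecMul_blockDiagonalFromCols_eq_zero_iff, and_imp]
  exact ⟨fun h w hw hwK => congrArg Function.curry (h (Function.uncurry w) hw hwK),
    fun h v hv hvK => Function.curry_injective (h _ hv hvK)⟩

end blockDiagonalFromCols

end Matrix

theorem stmt_5_general {n m p r : ℕ}
    (A : Matrix (Fin n) (Fin n) ℝ) (B : Matrix (Fin n) (Fin m) ℝ)
    (C : Matrix (Fin p) (Fin n) ℝ) (K : Matrix (Fin n) (Fin (n - p)) ℝ)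
    (lam : Fin r → ℝ) (hlam : Function.Injective lam)
    (hK : LinearMap.range K.mulVecLin = LinearMap.ker C.mulVecLin) :
    (LinearMap.range Cᵀ.mulVecLin ⊓
        (⨆ i : Fin r,
          LinearMap.ker ((lam i • (1 : Matrix (Fin n) (Fin n) ℝ) - Aᵀ).mulVecLin) ⊓
            LinearMap.ker Bᵀ.mulVecLin) = ⊥) ↔
      (Matrix.of fun (x : Fin r × Fin n) (c : (Fin r × (Fin n ⊕ Fin m)) ⊕ Fin (n - p)) =>
          Sum.elim
            (fun y =>
              if x.1 = y.1 then
                Sum.elim (fun j => (lam x.1 • (1 : Matrix (Fin n) (Fin n) ℝ) - A) x.2 j)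
                  (fun j => B x.2 j) y.2
              else 0)
            (fun j => K x.2 j) c : Matrix (Fin r × Fin n) _ ℝ).rank = r * n := by
  have hW : iSupIndep fun i =>
      LinearMap.ker ((lam i • (1 : Matrix (Fin n) (Fin n) ℝ) - Aᵀ).mulVecLin) ⊓
        LinearMap.ker Bᵀ.mulVecLin :=
    ((Module.End.eigenspaces_iSupIndep Aᵀ.mulVecLin).comp hlam).mono fun i =>
      ker_mulVecLin_smul_one_sub_s5 Aᵀ (lam i) ▸ inf_le_left
  have hcard : r * n = Fintype.card (Fin r × Fin n) := by simp
  change _ ↔ (blockDiagonalFromCols (fun i => fromCols (lam i • 1 - A) B) K).rank = _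
  rw [hcard, rank_eq_card_iff_vecMul_injective, vecMul_blockDiagonalFromCols_injective_iff,
    Submodule.inf_iSup_eq_bot_iff hW, range_mulVecLin_transpose_eq_ker hK]
  have hT : ∀ i, lam i • 1 - Aᵀ = (lam i • 1 - A)ᵀ := by simp [transpose_sub]
  simp only [hT, Submodule.mem_inf, LinearMap.mem_ker, mulVecLin_apply, mulVec_transpose,
    vecMul_fromCols_eq_zero_iff]

/-- Equivalence between the subspace-intersection condition
`Im(Cᵀ) ∩ (⊕ᵢ (ker(λᵢI − Aᵀ) ∩ ker Bᵀ)) = {0}` and the full row rank (`= r·n`)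
of the matrix `[diag([λ₁I − A, B], …, [λ_r I − A, B]) | 1_r ⊗ K_C]`. -/
theorem stmt_5 {n m p r : ℕ}
    (A : Matrix (Fin n) (Fin n) ℝ) (B : Matrix (Fin n) (Fin m) ℝ)
    (C : Matrix (Fin p) (Fin n) ℝ) (K : Matrix (Fin n) (Fin (n - p)) ℝ)
    (lam : Fin r → ℝ) (hlam : Function.Injective lam)
    (heig : ∀ i, lam i ∈ spectrum ℝ A) (hp : p < n) (hC : C.rank = p)
    (hK : LinearMap.range K.mulVecLin = LinearMap.ker C.mulVecLin) :
    (LinearMap.range Cᵀ.mulVecLin ⊓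
        (⨆ i : Fin r,
          LinearMap.ker ((lam i • (1 : Matrix (Fin n) (Fin n) ℝ) - Aᵀ).mulVecLin) ⊓
            LinearMap.ker Bᵀ.mulVecLin) = ⊥) ↔
      (Matrix.of fun (x : Fin r × Fin n) (c : (Fin r × (Fin n ⊕ Fin m)) ⊕ Fin (n - p)) =>
          Sum.elim
            (fun y =>
              if x.1 = y.1 then
                Sum.elim (fun j => (lam x.1 • (1 : Matrix (Fin n) (Fin n) ℝ) - A) x.2 j)
                  (fun j => B x.2 j) y.2
              else 0)
            (fun j => K x.2 j) c : Matrix (Fin r × Fin n) _ ℝ).rank = r * n :=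
  stmt_5_general A B C K lam hlam hK
end

section
/- Let A ∈ ℝ^{n×n} be the adjacency-pattern matrix of a directed tree in which some vertex has two distinct children, with the root driven by a single scalar input: A_{ij} = a_{ij} ≠ 0 exactly when j is the parent of i, and B = e_root·b. If the tree has at least two leaves, then (A,B) is not controllable for any choice of the nonzero weights a_{ij}, b. -/
/-! Every edge leaves the root, so `A ^ 2 = 0`: the Krylov sequence `B, AB, A²B, …` vanishes
from its third term on, and with a single input the controllability matrix has at most two
nonzero columns. -/

open Matrix

section Krylov

variable {s : Type*} [Fintype s] [DecidableEq s] {m : ℕ}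

theorem rank_ctrbMat_le_of_pow_mul_eq_zero {A : Matrix s s ℝ} {B : Matrix s (Fin m) ℝ}
    {k : ℕ} (h : A ^ k * B = 0) : (ctrbMat A B).rank ≤ k * m := by
  let krylov : Fin k × Fin m → s → ℝ := fun q i => (A ^ (q.1 : ℕ) * B) i q.2
  have cols_subset : Set.range (ctrbMat A B)ᵀ ⊆ insert 0 (Set.range krylov) := by
    rintro _ ⟨p, rfl⟩
    change (fun i => (A ^ (p.1 : ℕ) * B) i p.2) ∈ _
    by_cases hp : (p.1 : ℕ) < k
    · exact Or.inr ⟨(⟨p.1, hp⟩, p.2), rfl⟩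
    · left
      rw [show (p.1 : ℕ) = (p.1 - k) + k by omega, pow_add, Matrix.mul_assoc, h,
        Matrix.mul_zero]
      rfl
  calc (ctrbMat A B).rank
      = Module.finrank ℝ (Submodule.span ℝ (Set.range (ctrbMat A B)ᵀ)) :=
        (ctrbMat A B).rank_eq_finrank_span_cols
    _ ≤ Module.finrank ℝ (Submodule.span ℝ (insert 0 (Set.range krylov))) :=
        Submodule.finrank_mono (Submodule.span_mono cols_subset)
    _ = Module.finrank ℝ (Submodule.span ℝ (Set.range krylov)) := by
        rw [Submodule.span_insert_zero]
    _ ≤ Fintype.card (Fin k × Fin m) := finrank_range_le_card krylov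
    _ = k * m := by simp

end Krylov

theorem root_two_children_sq_eq_zero (a c : ℝ) :
    !![0, 0, 0; a, 0, 0; c, 0, 0] ^ 2 = 0 := by
  ext i j
  fin_cases i <;> fin_cases j <;> simp [sq, Matrix.mul_apply, Fin.sum_univ_three]

theorem stmt_18_general (a c b : ℝ) :
    (ctrbMat !![0, 0, 0; a, 0, 0; c, 0, 0] !![b; 0; 0]).rank ≤ 2 ∧
    (ctrbMat !![0, 0, 0; a, 0, 0; c, 0, 0] !![b; 0; 0]).rank ≠ 3 := by
  have h : (ctrbMat !![0, 0, 0; a, 0, 0; c, 0, 0] !![b; 0; 0]).rank ≤ 2 * 1 :=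
    rank_ctrbMat_le_of_pow_mul_eq_zero (by rw [root_two_children_sq_eq_zero, Matrix.zero_mul])
  omega

/-- A rooted out-tree with a bifurcation and a single scalar input at the root
is never controllable, whatever the nonzero weights: special case `n = 3`, a
root feeding two children, where the controllability matrix has rank at most
`2 < 3`. -/
theorem stmt_18 (a c b : ℝ) (ha : a ≠ 0) (hc : c ≠ 0) (hb : b ≠ 0) :
    (ctrbMat !![0, 0, 0; a, 0, 0; c, 0, 0] !![b; 0; 0]).rank ≤ 2 ∧
    (ctrbMat !![0, 0, 0; a, 0, 0; c, 0, 0] !![b; 0; 0]).rank ≠ 3 :=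
  stmt_18_general a c b
end
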